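/- Let p be an odd prime such that 2p + 1 is also prime (a Sophie Germain prime pair), and let n = p(2p+1). Then the quotient group G_n^* = (ℤ/nℤ)ˣ / ⟨-1⟩ is cyclic. -/

import Mathlib

/-!
By the Chinese remainder theorem, `(ℤ/nℤ)ˣ ≃* (ℤ/pℤ)ˣ × (ℤ/qℤ)ˣ` with `q = 2p + 1`, a group of
order `(p - 1) · 2p` in which `-1` becomes `(-1, -1)`. Pick `a` of order `p - 1` and `b` of order
`p` (Cauchy). Then `(a, b)` has order `p (p - 1)`, half the order of the group, and `(-1, -1)` is
not a power of it because `b` has odd order. So `⟨(a, b)⟩` maps isomorphically onto the quotient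
by `⟨-1⟩`.
-/

open Subgroup

section

variable {G : Type*} [Group G]

theorem neg_one_notMem_zpowers_of_odd_orderOf [HasDistribNeg G] (h : (-1 : G) ≠ 1) {g : G}
    (hg : Odd (orderOf g)) : (-1 : G) ∉ zpowers g := by
  rintro ⟨k, hk⟩
  apply h
  calc (-1 : G) = (-1) ^ orderOf g := hg.neg_one_pow.symm
    _ = (g ^ orderOf g) ^ k := by rw [← hk, ← zpow_natCast, ← zpow_mul, mul_comm, zpow_mul,
        zpow_natCast]
    _ = 1 := by rw [pow_orderOf_eq_one, one_zpow]

theorem disjoint_zpowers_of_sq_eq_one {g z : G} (hz : z ^ 2 = 1) (hg : z ∉ zpowers g) :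
    Disjoint (zpowers g) (zpowers z) := by
  rw [disjoint_def]
  intro x hxg hxz
  obtain ⟨k, rfl⟩ := mem_zpowers_iff.mp hxz
  obtain ⟨m, rfl | rfl⟩ := Int.even_or_odd' k
  · rw [zpow_mul, zpow_ofNat, hz, one_zpow]
  · rw [zpow_add_one, zpow_mul, zpow_ofNat, hz, one_zpow, one_mul] at hxg
    exact absurd hxg hg

theorem isCyclic_quotient_of_disjoint_zpowers [Finite G] {H : Subgroup G} [H.Normal] {g : G}
    (hdisj : Disjoint (zpowers g) H) (hcard : orderOf g * Nat.card H = Nat.card G) :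
    IsCyclic (G ⧸ H) := by
  let f := (QuotientGroup.mk' H).comp (zpowers g).subtype
  have hinj : Function.Injective f := by
    refine (injective_iff_map_eq_one f).mpr fun x hx => Subtype.ext ?_
    exact disjoint_def.mp hdisj x.2 ((QuotientGroup.eq_one_iff _).mp hx)
  have hcard_quot : Nat.card (G ⧸ H) = Nat.card (zpowers g) := by
    have := H.card_eq_card_quotient_mul_card_subgroup
    rw [Nat.card_zpowers]
    exact Nat.eq_of_mul_eq_mul_right Nat.card_pos (this.symm.trans hcard.symm)
  exact isCyclic_of_surjective f (hinj.bijective_of_nat_card_le hcard_quot.le).2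

end

theorem isCyclic_quotient_zpowers_iff_of_mulEquiv {G G' : Type*} [CommGroup G] [CommGroup G']
    (e : G ≃* G') (z : G) :
    IsCyclic (G ⧸ zpowers z) ↔ IsCyclic (G' ⧸ zpowers (e z)) :=
  (QuotientGroup.congr _ _ e (MonoidHom.map_zpowers e.toMonoidHom z)).isCyclic

theorem unitsEquivProd_neg_one {R S T : Type*} [Ring R] [Ring S] [Ring T] (f : R ≃+* S × T) :
    ((Units.mapEquiv f.toMulEquiv).trans MulEquiv.prodUnits) (-1) = -1 := by
  ext <;> simp [MulEquiv.prodUnits]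

theorem isCyclic_units_prod_quotient_zpowers_neg_one (p : ℕ) [Fact p.Prime] (hpodd : Odd p)
    [Fact (2 * p + 1).Prime] :
    IsCyclic (((ZMod p)ˣ × (ZMod (2 * p + 1))ˣ) ⧸ zpowers (-1)) := by
  have hp := (Fact.out : p.Prime)
  have : Fact (2 < 2 * p + 1) := ⟨by linarith [hp.two_le]⟩
  obtain ⟨a, ha⟩ := IsCyclic.exists_ofOrder_eq_natCard (α := (ZMod p)ˣ)
  obtain ⟨b, hb⟩ : ∃ b : (ZMod (2 * p + 1))ˣ, orderOf b = p := by
    refine exists_prime_orderOf_dvd_card p ?_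
    rw [ZMod.card_units, Nat.add_sub_cancel]
    exact dvd_mul_left p 2
  have hneg_one_ne_one : (-1 : (ZMod (2 * p + 1))ˣ) ≠ 1 := by
    rw [Ne, Units.ext_iff]
    exact ZMod.neg_one_ne_one
  have hneg_one : (-1 : (ZMod p)ˣ × (ZMod (2 * p + 1))ˣ) ∉ zpowers (a, b) := fun h =>
    neg_one_notMem_zpowers_of_odd_orderOf hneg_one_ne_one (hb ▸ hpodd) <| by
      simpa [MonoidHom.map_zpowers] using mem_map_of_mem (MonoidHom.snd _ _) h
  have hsq : (-1 : (ZMod p)ˣ × (ZMod (2 * p + 1))ˣ) ^ 2 = 1 := by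
    ext <;> simp
  have horder_neg_one : orderOf (-1 : (ZMod p)ˣ × (ZMod (2 * p + 1))ˣ) = 2 :=
    orderOf_eq_prime hsq fun h => hneg_one_ne_one (congrArg Prod.snd h)
  refine isCyclic_quotient_of_disjoint_zpowers (g := (a, b))
    (disjoint_zpowers_of_sq_eq_one hsq hneg_one) ?_
  have hcop : (p - 1).Coprime p :=
    (Nat.coprime_self_sub_left hp.one_le).mpr (Nat.coprime_one_left p)
  rw [Nat.card_zpowers, horder_neg_one, Prod.orderOf_mk, ha, hb, Nat.card_prod,
    Nat.card_eq_fintype_card, Nat.card_eq_fintype_card, ZMod.card_units, ZMod.card_units,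
    hcop.lcm_eq_mul, Nat.add_sub_cancel]
  ring

/-- Let `p` be an odd prime such that `2p + 1` is also prime, and `n = p(2p+1)`.
Then `(ℤ/nℤ)ˣ / ⟨-1⟩` is cyclic. -/
theorem stmt_9 (p : ℕ) (hp : p.Prime) (hpodd : Odd p) (hsg : (2 * p + 1).Prime)
    (n : ℕ) (hn : n = p * (2 * p + 1)) :
    IsCyclic ((ZMod n)ˣ ⧸ Subgroup.zpowers (-1 : (ZMod n)ˣ)) := by
  have : Fact p.Prime := ⟨hp⟩
  have : Fact (2 * p + 1).Prime := ⟨hsg⟩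
  have hcop : p.Coprime (2 * p + 1) := (Nat.coprime_primes hp hsg).mpr (by omega)
  subst hn
  rw [isCyclic_quotient_zpowers_iff_of_mulEquiv
    ((Units.mapEquiv (ZMod.chineseRemainder hcop).toMulEquiv).trans MulEquiv.prodUnits),
    unitsEquivProd_neg_one]
  exact isCyclic_units_prod_quotient_zpowers_neg_one p hpodd
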